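/- Constant-factor equivalence of the CCZ gadget and the 2-local iSWAP construction on three qubits: let T_CCZ be the symmetric 8×8 real matrix with rows (1,0,0,0,0,0,0,0), (0, 1/2, 0, 0, 1/(6√3), 0, 1/(6√3), 1/18), (0, 0, 1/2, 0, 1/(6√3), 1/(6√3), 0, 1/18), (0, 0, 0, 1/2, 0, 1/(6√3), 1/(6√3), 1/18), (0, 1/(6√3), 1/(6√3), 0, 4/9, 1/18, 1/18, 1/(3√3)), (0, 0, 1/(6√3), 1/(6√3), 1/18, 4/9, 1/18, 1/(3√3)), (0, 1/(6√3), 0, 1/(6√3), 1/18, 1/18, 4/9, 1/(3√3)), (0, 1/18, 1/18, 1/18, 1/(3√3), 1/(3√3), 1/(3√3), 11/18), and let T_iSWAP' be the symmetric 8×8 real matrix with rows (1,0,0,0,0,0,0,0), (0, 1/3, 1/9, 1/9, 2/(9√3), 0, 2/(9√3), 0), (0, 1/9, 1/3, 1/9, 2/(9√3), 2/(9√3), 0, 0), (0, 1/9, 1/9, 1/3, 0, 2/(9√3), 2/(9√3), 0), (0, 2/(9√3), 2/(9√3), 0, 5/27, 1/9, 1/9, 4/(9√3)), (0, 0, 2/(9√3),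 2/(9√3), 1/9, 5/27, 1/9, 4/(9√3)), (0, 2/(9√3), 0, 2/(9√3), 1/9, 1/9, 5/27, 4/(9√3)), (0, 0, 0, 0, 4/(9√3), 4/(9√3), 4/(9√3), 5/9). Then both (19/12)(I − T_CCZ) − (I − T_iSWAP') and (I − T_iSWAP') − (4/5)(I − T_CCZ) are positive semidefinite; i.e. (4/5)(I − T_CCZ) ⪯ (I − T_iSWAP') ⪯ (19/12)(I − T_CCZ) in the Loewner order. -/

import Mathlib

open Matrix

/-- Matrix representation (in the orthonormal basis `{u₀,u₁}^⊗3`) of the second moment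
operator of the 3-local ironed gadget built from the `CCZ` gate (Eq. (eq:CCZ)). -/
noncomputable def TCCZ : Matrix (Fin 8) (Fin 8) ℝ :=
  !![1, 0, 0, 0, 0, 0, 0, 0;
     0, 1/2, 0, 0, 1/(6*Real.sqrt 3), 0, 1/(6*Real.sqrt 3), 1/18;
     0, 0, 1/2, 0, 1/(6*Real.sqrt 3), 1/(6*Real.sqrt 3), 0, 1/18;
     0, 0, 0, 1/2, 0, 1/(6*Real.sqrt 3), 1/(6*Real.sqrt 3), 1/18;
     0, 1/(6*Real.sqrt 3), 1/(6*Real.sqrt 3), 0, 4/9, 1/18, 1/18, 1/(3*Real.sqrt 3);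
     0, 0, 1/(6*Real.sqrt 3), 1/(6*Real.sqrt 3), 1/18, 4/9, 1/18, 1/(3*Real.sqrt 3);
     0, 1/(6*Real.sqrt 3), 0, 1/(6*Real.sqrt 3), 1/18, 1/18, 4/9, 1/(3*Real.sqrt 3);
     0, 1/18, 1/18, 1/18, 1/(3*Real.sqrt 3), 1/(3*Real.sqrt 3), 1/(3*Real.sqrt 3), 11/18]

/-- Matrix representation of `(1/3)(T_{2,(i,j)}^{iSWAP} + T_{2,(j,k)}^{iSWAP} +
T_{2,(i,k)}^{iSWAP})`, the average of the three 2-local iSWAP gadget moment operators on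
three qubits (Eq. (eq:iSWAP-CCZ)). -/
noncomputable def TiSWAP3 : Matrix (Fin 8) (Fin 8) ℝ :=
  !![1, 0, 0, 0, 0, 0, 0, 0;
     0, 1/3, 1/9, 1/9, 2/(9*Real.sqrt 3), 0, 2/(9*Real.sqrt 3), 0;
     0, 1/9, 1/3, 1/9, 2/(9*Real.sqrt 3), 2/(9*Real.sqrt 3), 0, 0;
     0, 1/9, 1/9, 1/3, 0, 2/(9*Real.sqrt 3), 2/(9*Real.sqrt 3), 0;
     0, 2/(9*Real.sqrt 3), 2/(9*Real.sqrt 3), 0, 5/27, 1/9, 1/9, 4/(9*Real.sqrt 3);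
     0, 0, 2/(9*Real.sqrt 3), 2/(9*Real.sqrt 3), 1/9, 5/27, 1/9, 4/(9*Real.sqrt 3);
     0, 2/(9*Real.sqrt 3), 0, 2/(9*Real.sqrt 3), 1/9, 1/9, 5/27, 4/(9*Real.sqrt 3);
     0, 0, 0, 0, 4/(9*Real.sqrt 3), 4/(9*Real.sqrt 3), 4/(9*Real.sqrt 3), 5/9]

/-! In the basis obtained by dividing the three weight-two vectors `u₁u₁u₀, u₀u₁u₁, u₁u₀u₁`
by `√3`, both moment operators and the identity are represented by rational matrices, so each of
the two Loewner gaps is a congruence `Dᴴ * B * D` of a rational matrix `B`. Gaussian elimination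
on `B` gives a factorization `B = L * diagonal d * Lᴴ` with nonnegative pivots `d`, which
certifies `B ⪰ 0`. -/

theorem mul_diagonal_mul_conjTranspose_apply {m n R : Type*} [Fintype n] [DecidableEq n]
    [NonUnitalNonAssocSemiring R] [StarRing R] (M : Matrix m n R) (d : n → R) (i j : m) :
    (M * diagonal d * Mᴴ) i j = ∑ k, M i k * d k * star (M j k) := by
  simp only [mul_apply (M := M * diagonal d), mul_diagonal, conjTranspose_apply]

theorem posSemidef_of_eq_mul_diagonal_mul_conjTranspose {m n R : Type*} [Fintype m] [Fintype n]
    [DecidableEq n] [Ring R] [PartialOrder R] [StarRing R] [StarOrderedRing R]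
    {A : Matrix m m R} {M : Matrix m n R} {d : n → R} (hd : 0 ≤ d)
    (h : A = M * diagonal d * Mᴴ) : A.PosSemidef :=
  h ▸ (PosSemidef.diagonal hd).mul_mul_conjTranspose_same M

noncomputable def weightTwoScaling : Matrix (Fin 8) (Fin 8) ℝ :=
  diagonal ![1, 1, 1, 1, (√3)⁻¹, (√3)⁻¹, (√3)⁻¹, 1]

noncomputable def oneScaled : Matrix (Fin 8) (Fin 8) ℝ :=
  diagonal ![1, 1, 1, 1, 3, 3, 3, 1]

noncomputable def TCCZScaled : Matrix (Fin 8) (Fin 8) ℝ :=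
  !![1, 0, 0, 0, 0, 0, 0, 0;
     0, 1/2, 0, 0, 1/6, 0, 1/6, 1/18;
     0, 0, 1/2, 0, 1/6, 1/6, 0, 1/18;
     0, 0, 0, 1/2, 0, 1/6, 1/6, 1/18;
     0, 1/6, 1/6, 0, 4/3, 1/6, 1/6, 1/3;
     0, 0, 1/6, 1/6, 1/6, 4/3, 1/6, 1/3;
     0, 1/6, 0, 1/6, 1/6, 1/6, 4/3, 1/3;
     0, 1/18, 1/18, 1/18, 1/3, 1/3, 1/3, 11/18]

noncomputable def TiSWAP3Scaled : Matrix (Fin 8) (Fin 8) ℝ :=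
  !![1, 0, 0, 0, 0, 0, 0, 0;
     0, 1/3, 1/9, 1/9, 2/9, 0, 2/9, 0;
     0, 1/9, 1/3, 1/9, 2/9, 2/9, 0, 0;
     0, 1/9, 1/9, 1/3, 0, 2/9, 2/9, 0;
     0, 2/9, 2/9, 0, 5/9, 1/3, 1/3, 4/9;
     0, 0, 2/9, 2/9, 1/3, 5/9, 1/3, 4/9;
     0, 2/9, 0, 2/9, 1/3, 1/3, 5/9, 4/9;
     0, 0, 0, 0, 4/9, 4/9, 4/9, 5/9]

theorem one_eq_scaled :
    (1 : Matrix (Fin 8) (Fin 8) ℝ) = weightTwoScalingᴴ * oneScaled * weightTwoScaling := by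
  have h3 : √3 * √3 = 3 := Real.mul_self_sqrt (by norm_num)
  ext i j
  simp only [weightTwoScaling, oneScaled, diagonal_conjTranspose, star_trivial,
    diagonal_mul_diagonal]
  fin_cases i <;> fin_cases j <;> simp <;> field_simp <;> linarith

theorem TCCZ_eq_scaled : TCCZ = weightTwoScalingᴴ * TCCZScaled * weightTwoScaling := by
  have h3 : √3 * √3 = 3 := Real.mul_self_sqrt (by norm_num)
  ext i j
  simp only [weightTwoScaling, diagonal_conjTranspose, star_trivial, diagonal_mul, mul_diagonal]
  fin_cases i <;> fin_cases j <;> simp [TCCZ, TCCZScaled] <;> field_simp <;> linarith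

theorem TiSWAP3_eq_scaled : TiSWAP3 = weightTwoScalingᴴ * TiSWAP3Scaled * weightTwoScaling := by
  have h3 : √3 * √3 = 3 := Real.mul_self_sqrt (by norm_num)
  ext i j
  simp only [weightTwoScaling, diagonal_conjTranspose, star_trivial, diagonal_mul, mul_diagonal]
  fin_cases i <;> fin_cases j <;> simp [TiSWAP3, TiSWAP3Scaled] <;> field_simp <;> linarith

theorem posSemidef_upperGap_scaled :
    ((19/12 : ℝ) • (oneScaled - TCCZScaled) - (oneScaled - TiSWAP3Scaled)).PosSemidef := by
  refine posSemidef_of_eq_mul_diagonal_mul_conjTranspose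
    (M := !![1, 0, 0, 0, 0, 0, 0, 0;
             0, 1, 0, 0, 0, 0, 0, 0;
             0, 8/9, 1, 0, 0, 0, 0, 0;
             0, 8/9, 8/17, 1, 0, 0, 0, 0;
             0, -1/3, -3/17, 48/25, 1, 0, 0, 0;
             0, 0, -27/17, -27/25, 1, 1, 0, 0;
             0, -1/3, 24/17, -27/25, 1, 0, 1, 0;
             0, -19/27, -19/51, -19/75, -1, 0, 0, 1])
    (d := ![0, 1/8, 17/648, 25/1224, 47/450, 0, 0, 0])
    (fun i => by fin_cases i <;> norm_num) ?_
  ext i j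
  simp only [mul_diagonal_mul_conjTranspose_apply, star_trivial, Fin.sum_univ_eight]
  fin_cases i <;> fin_cases j <;> simp [oneScaled, TCCZScaled, TiSWAP3Scaled] <;> norm_num

theorem posSemidef_lowerGap_scaled :
    ((oneScaled - TiSWAP3Scaled) - (4/5 : ℝ) • (oneScaled - TCCZScaled)).PosSemidef := by
  refine posSemidef_of_eq_mul_diagonal_mul_conjTranspose
    (M := !![1, 0, 0, 0, 0, 0, 0, 0;
             0, 1, 0, 0, 0, 0, 0, 0;
             0, -5/12, 1, 0, 0, 0, 0, 0;
             0, -5/12, -5/7, 1, 0, 0, 0, 0;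
             0, -1/3, -4/7, -20/17, 1, 0, 0, 0;
             0, 0, -48/119, -24/17, -1/2, 1, 0, 0;
             0, -1/3, -20/119, -24/17, -1/2, -1, 1, 0;
             0, 1/6, 2/7, 1, 0, 0, 0, 1])
    (d := ![0, 4/15, 119/540, 34/315, 658/765, 329/510, 0, 0])
    (fun i => by fin_cases i <;> norm_num) ?_
  ext i j
  simp only [mul_diagonal_mul_conjTranspose_apply, star_trivial, Fin.sum_univ_eight]
  fin_cases i <;> fin_cases j <;> simp [oneScaled, TCCZScaled, TiSWAP3Scaled] <;> norm_num

/-- **Constant-factor equivalence of the CCZ gadget and the 2-local iSWAP construction on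
three qubits**: both `(19/12)(I − T_CCZ) − (I − T_iSWAP')` and
`(I − T_iSWAP') − (4/5)(I − T_CCZ)` are positive semidefinite, i.e.
`(4/5)(I − T_CCZ) ⪯ (I − T_iSWAP') ⪯ (19/12)(I − T_CCZ)` in the Loewner order. -/
theorem CCZ_vs_iSWAP_constant_factor :
    ((19/12 : ℝ) • (1 - TCCZ) - (1 - TiSWAP3)).PosSemidef ∧
    ((1 - TiSWAP3) - (4/5 : ℝ) • (1 - TCCZ)).PosSemidef := by
  rw [one_eq_scaled, TCCZ_eq_scaled, TiSWAP3_eq_scaled]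
  constructor
  · convert posSemidef_upperGap_scaled.conjTranspose_mul_mul_same weightTwoScaling using 1
    simp only [Matrix.mul_sub, Matrix.sub_mul, Matrix.mul_smul, Matrix.smul_mul, smul_sub]
  · convert posSemidef_lowerGap_scaled.conjTranspose_mul_mul_same weightTwoScaling using 1
    simp only [Matrix.mul_sub, Matrix.sub_mul, Matrix.mul_smul, Matrix.smul_mul, smul_sub]
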